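/- arXiv:0907.1272 — 4 statements merged into one kernel-verified Lean document; each statement's English description precedes it below -/
import Mathlib

section
/- Every finite simple graph admits a nowhere-harmonic 2-coloring, i.e., a labeling of its vertices with values in {1,2} such that no vertex's label equals the average of the labels of its neighbors (vertices with no neighbors are vacuously fine). -/
/-!
Take a maximal independent set `S` and colour it `1`, everything else `2`. A vertex of `S` has
only neighbours coloured `2`, so its colour lies strictly below their average. A vertex outside
`S` is coloured `2`, the largest colour, and by maximality it has a neighbour in `S`, so the
average of its neighbours lies strictly below `2`.
-/

namespace SimpleGraph

variable {V : Type*} {G : SimpleGraph V}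

theorem exists_adj_mem_of_maximal_isIndepSet {s : Set V} (hs : Maximal G.IsIndepSet s) {v : V}
    (hv : v ∉ s) : ∃ w ∈ s, G.Adj v w := by
  by_contra! hnadj
  refine hv (hs.mem_of_prop_insert ?_)
  rw [isIndepSet_iff, Set.pairwise_insert]
  exact ⟨hs.prop, fun w hw _ => ⟨hnadj w hw, fun hwv => hnadj w hw hwv.symm⟩⟩

variable [Fintype V] [DecidableRel G.Adj] {R : Type*} [Semiring R] [PartialOrder R]
  [IsOrderedCancelAddMonoid R] {f : V → R} {v : V}

theorem sum_neighborFinset_lt_degree_mul (hle : ∀ w, G.Adj v w → f w ≤ f v)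
    (hlt : ∃ w, G.Adj v w ∧ f w < f v) :
    ∑ w ∈ G.neighborFinset v, f w < G.degree v * f v := by
  obtain ⟨w, hvw, hw⟩ := hlt
  calc ∑ w ∈ G.neighborFinset v, f w < ∑ _w ∈ G.neighborFinset v, f v :=
        Finset.sum_lt_sum (fun w hw => hle w ((mem_neighborFinset ..).1 hw))
          ⟨w, (mem_neighborFinset ..).2 hvw, hw⟩
    _ = G.degree v * f v := by rw [Finset.sum_const, card_neighborFinset_eq_degree, nsmul_eq_mul]

theorem degree_mul_lt_sum_neighborFinset (hlt : ∀ w, G.Adj v w → f v < f w)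
    (hdeg : 0 < G.degree v) : G.degree v * f v < ∑ w ∈ G.neighborFinset v, f w := by
  obtain ⟨w, hw⟩ := (G.degree_pos_iff_exists_adj v).1 hdeg
  calc G.degree v * f v = ∑ _w ∈ G.neighborFinset v, f v := by
        rw [Finset.sum_const, card_neighborFinset_eq_degree, nsmul_eq_mul]
    _ < ∑ w ∈ G.neighborFinset v, f w :=
        Finset.sum_lt_sum (fun w hw => (hlt w ((mem_neighborFinset ..).1 hw)).le)
          ⟨w, (mem_neighborFinset ..).2 hw, hlt w hw⟩

end SimpleGraph

theorem stmt0_general {V : Type*} [Fintype V] (G : SimpleGraph V)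
    [DecidableRel G.Adj] :
    ∃ c : V → ℕ, (∀ v, c v = 1 ∨ c v = 2) ∧
      ∀ v, 0 < G.degree v →
        (G.degree v : ℚ) * c v ≠ ∑ w ∈ G.neighborFinset v, (c w : ℚ) := by
  classical
  obtain ⟨S, -, hS⟩ := Finite.exists_le_maximal (p := G.IsIndepSet) (a := ∅) (by simp)
  let c : V → ℕ := fun v => if v ∈ S then 1 else 2
  refine ⟨c, fun v => ite_eq_or_eq .., fun v hdeg => ?_⟩
  by_cases hvS : v ∈ S
  · refine (G.degree_mul_lt_sum_neighborFinset (f := fun w => (c w : ℚ)) (fun w hvw => ?_)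
      hdeg).ne
    have hwS : w ∉ S := fun hwS => hS.prop hvS hwS (G.ne_of_adj hvw) hvw
    simp [c, hvS, hwS]
  · refine (G.sum_neighborFinset_lt_degree_mul (f := fun w => (c w : ℚ)) (fun w _ => ?_) ?_).ne'
    · by_cases hwS : w ∈ S <;> simp [c, hvS, hwS]
    · obtain ⟨w, hwS, hvw⟩ := SimpleGraph.exists_adj_mem_of_maximal_isIndepSet hS hvS
      exact ⟨w, hvw, by simp [c, hvS, hwS]⟩

/-- Every finite simple graph admits a nowhere-harmonic 2-coloring. -/
theorem stmt0 {V : Type*} [Fintype V] [DecidableEq V] (G : SimpleGraph V)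
    [DecidableRel G.Adj] :
    ∃ c : V → ℕ, (∀ v, c v = 1 ∨ c v = 2) ∧
      ∀ v, 0 < G.degree v →
        (G.degree v : ℚ) * c v ≠ ∑ w ∈ G.neighborFinset v, (c w : ℚ) :=
  stmt0_general G
end

section
/- For a graph G with at least one edge, the number of nowhere-harmonic m-colorings ℏ_G(m) is even for every m ≥ 1. -/
/-!
Reflecting colours, `c ↦ m + 1 - c`, is an involution on colourings that preserves harmonicity
at every vertex, because the degree-weighted average commutes with affine maps. A colouring it
fixes is the constant `(m + 1) / 2`, harmonic at an endpoint of any edge, so the involution has no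
fixed point among nowhere-harmonic colourings and these come in pairs.
-/

open Finset

theorem Finset.even_card_of_involutive {α : Type*} {s : Finset α} {g : α → α}
    (hg : Function.Involutive g) (hs : ∀ a ∈ s, g a ∈ s) (hfix : ∀ a ∈ s, g a ≠ a) :
    Even #s := by
  rw [← ZMod.natCast_eq_zero_iff_even, card_eq_sum_ones, Nat.cast_sum, Nat.cast_one]
  exact sum_involution (fun a _ => g a) (fun _ _ => by decide) (fun a ha _ => hfix a ha) hs
    (fun a _ => hg a)

theorem Fin.natCast_val_rev_add_one {R : Type*} [AddGroupWithOne R] {m : ℕ} (i : Fin m) :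
    ((i.rev : ℕ) + 1 : R) = (m + 1) - ((i : ℕ) + 1) := by
  have h : (i.rev : ℕ) + 1 + (i + 1) = m + 1 := by rw [Fin.val_rev]; omega
  rw [eq_sub_iff_add_eq]
  exact_mod_cast congrArg (Nat.cast : ℕ → R) h

namespace SimpleGraph

variable {V R : Type*} (G : SimpleGraph V) [G.LocallyFinite]

def IsHarmonicAt [Ring R] (f : V → R) (v : V) : Prop :=
  (G.degree v : R) * f v = ∑ w ∈ G.neighborFinset v, f w

def IsNowhereHarmonic [Ring R] (f : V → R) : Prop :=
  ∀ v, 0 < G.degree v → ¬ G.IsHarmonicAt f v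

variable {G}

theorem isHarmonicAt_const [Ring R] (a : R) (v : V) : G.IsHarmonicAt (fun _ => a) v := by
  simp [IsHarmonicAt]

theorem isHarmonicAt_const_sub_iff [Ring R] {f : V → R} {v : V} (a : R) :
    G.IsHarmonicAt (fun w => a - f w) v ↔ G.IsHarmonicAt f v := by
  simp only [IsHarmonicAt, sum_sub_distrib, sum_const, card_neighborFinset_eq_degree,
    nsmul_eq_mul, mul_sub, sub_right_inj]

theorem IsNowhereHarmonic.const_sub [Ring R] {f : V → R} (hf : G.IsNowhereHarmonic f) (a : R) :
    G.IsNowhereHarmonic (fun w => a - f w) :=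
  fun v hv => (isHarmonicAt_const_sub_iff a).not.mpr (hf v hv)

theorem not_isNowhereHarmonic_const [Ring R] (hE : G.edgeSet.Nonempty) (a : R) :
    ¬ G.IsNowhereHarmonic (fun _ : V => a) := by
  obtain ⟨e, he⟩ := hE
  induction e with
  | h u w =>
    intro h
    exact h u (G.degree_pos_iff_exists_adj u |>.mpr ⟨w, he⟩) (isHarmonicAt_const a u)

end SimpleGraph

theorem stmt3_general {V : Type*} [Fintype V] [DecidableEq V] (G : SimpleGraph V)
    [DecidableRel G.Adj] (hE : G.edgeSet.Nonempty) (m : ℕ) :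
    Even ((Finset.univ.filter (fun c : V → Fin m =>
      ∀ v, 0 < G.degree v →
        (G.degree v : ℚ) * ((c v : ℕ) + 1) ≠
          ∑ w ∈ G.neighborFinset v, ((c w : ℕ) + 1 : ℚ))).card) := by
  -- the colours `Fin m` shifted to the paper's `1, …, m`
  let value (c : V → Fin m) (v : V) : ℚ := (c v : ℕ) + 1
  have value_rev (c : V → Fin m) : value (Fin.rev ∘ c) = fun v => (m + 1) - value c v :=
    funext fun v => Fin.natCast_val_rev_add_one (c v)
  refine even_card_of_involutive (g := (Fin.rev ∘ ·)) (fun c => funext fun v => Fin.rev_rev _)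
    (fun c hc => ?_) (fun c hc hfix => ?_) <;>
    rw [mem_filter_univ] at hc <;> replace hc : G.IsNowhereHarmonic (value c) := hc
  · rw [mem_filter_univ]
    have h := hc.const_sub ((m : ℚ) + 1)
    rwa [← value_rev] at h
  · have hconst : value c = fun _ => ((m : ℚ) + 1) / 2 := by
      funext v
      have := congrFun (value_rev c) v
      rw [hfix] at this
      linarith
    exact G.not_isNowhereHarmonic_const hE _ (hconst ▸ hc)

/-- For a graph with at least one edge, the number of nowhere-harmonic
m-colorings is even for every m ≥ 1. -/
theorem stmt3 {V : Type*} [Fintype V] [DecidableEq V] (G : SimpleGraph V)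
    [DecidableRel G.Adj] (hE : G.edgeSet.Nonempty) (m : ℕ) (hm : 1 ≤ m) :
    Even ((Finset.univ.filter (fun c : V → Fin m =>
      ∀ v, 0 < G.degree v →
        (G.degree v : ℚ) * ((c v : ℕ) + 1) ≠
          ∑ w ∈ G.neighborFinset v, ((c w : ℕ) + 1 : ℚ))).card) :=
  stmt3_general G hE m
end

section
/- For a connected finite simple graph G on n ≥ 2 vertices, for every sign vector s ∈ {±1}^V that is not constant (not all +1 and not all −1), there exists c : V → ℝ such that s(v)·(Lc)(v) > 0 for every v; consequently the image of the Laplacian L meets exactly 2^n − 2 of the 2^n open orthants of ℝ^V. -/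
/-!
Every `L c` has coordinate sum `0` (`L` is symmetric and kills constants), and for connected `G`
the kernel of `L` is one-dimensional, so by rank–nullity the image of `L` is exactly the
hyperplane `∑ x = 0`. That hyperplane meets the orthant of `s` iff `s` is not constant: a
constant sign forces a sum of terms of one strict sign, while for nonconstant `s` one takes
`#{s = -1}` on `{s = +1}` and `-#{s = +1}` on `{s = -1}`. There are `2 ^ n - 2` nonconstant `s`.
-/

open Matrix Finset

namespace SimpleGraph

variable {V : Type*} [Fintype V] [DecidableEq V] (G : SimpleGraph V) [DecidableRel G.Adj]

theorem sum_lapMatrix_mulVec {R : Type*} [CommRing R] (c : V → R) :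
    ∑ v, (G.lapMatrix R *ᵥ c) v = 0 := by
  rw [← one_dotProduct, dotProduct_mulVec, ← mulVec_transpose, (G.isSymm_lapMatrix (R := R)).eq,
    Pi.one_def, lapMatrix_mulVec_const_eq_zero, zero_dotProduct]

theorem range_toLin'_lapMatrix (hG : G.Connected) :
    LinearMap.range (G.lapMatrix ℝ).toLin' = LinearMap.ker (dotProductBilin ℝ ℝ (1 : V → ℝ)) := by
  obtain ⟨v₀⟩ := hG.nonempty
  have range_le : LinearMap.range (G.lapMatrix ℝ).toLin' ≤
      LinearMap.ker (dotProductBilin ℝ ℝ (1 : V → ℝ)) := by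
    rintro _ ⟨c, rfl⟩
    simp [one_dotProduct, G.sum_lapMatrix_mulVec]
  have finrank_ker : Module.finrank ℝ (LinearMap.ker (G.lapMatrix ℝ).toLin') = 1 := by
    rw [← card_connectedComponent_eq_finrank_ker_toLin'_lapMatrix, Fintype.card_eq_one_iff]
    exact ⟨G.connectedComponentMk v₀, fun C => C.ind fun w =>
      ConnectedComponent.sound (hG.preconnected w v₀)⟩
  have ker_ne_top : LinearMap.ker (dotProductBilin ℝ ℝ (1 : V → ℝ)) ≠ ⊤ := by
    rw [Ne, LinearMap.ker_eq_top]
    intro h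
    simpa using LinearMap.congr_fun h (Pi.single v₀ 1)
  have rank_nullity := LinearMap.finrank_range_add_finrank_ker (G.lapMatrix ℝ).toLin'
  have finrank_lt := Submodule.finrank_lt ker_ne_top
  rw [Module.finrank_fintype_fun_eq_card] at rank_nullity finrank_lt
  exact Submodule.eq_of_le_of_finrank_le range_le (by omega)

theorem range_lapMatrix_mulVec (hG : G.Connected) :
    Set.range (G.lapMatrix ℝ *ᵥ ·) = {x : V → ℝ | ∑ v, x v = 0} := by
  ext x
  have := SetLike.ext_iff.mp (G.range_toLin'_lapMatrix hG) x
  simpa [one_dotProduct] using this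

end SimpleGraph

theorem exists_sum_eq_zero_and_signs_iff {V R : Type*} [Fintype V] [Nonempty V] [CommRing R]
    [LinearOrder R] [IsStrictOrderedRing R] (s : V → Bool) :
    (∃ x : V → R, ∑ v, x v = 0 ∧ ∀ v, (if s v then (1 : R) else -1) * x v > 0) ↔
      ∃ u v, s u ≠ s v := by
  classical
  constructor
  · rintro ⟨x, hsum, hx⟩
    by_contra! hconst
    obtain ⟨v₀⟩ := ‹Nonempty V›
    have : 0 < ∑ v, (if s v₀ then (1 : R) else -1) * x v :=
      sum_pos (fun v _ => hconst v v₀ ▸ hx v) univ_nonempty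
    rw [← mul_sum, hsum, mul_zero] at this
    exact this.false
  · rintro ⟨u, v, huv⟩
    obtain ⟨a, ha, b, hb⟩ : ∃ a, s a = true ∧ ∃ b, s b = false := by
      cases hu : s u
      · exact ⟨v, by simpa [hu] using huv.symm, u, hu⟩
      · exact ⟨u, hu, v, by simpa [hu] using huv.symm⟩
    set p := (#{w | s w = true} : R)
    set q := (#{w | s w = false} : R)
    have hp : 0 < p := Nat.cast_pos.mpr (card_pos.mpr ⟨a, by simpa using ha⟩)
    have hq : 0 < q := Nat.cast_pos.mpr (card_pos.mpr ⟨b, by simpa using hb⟩)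
    refine ⟨fun w => if s w then q else -p, ?_, fun w => ?_⟩
    · rw [sum_ite]
      simp only [sum_const, nsmul_eq_mul, Bool.not_eq_true, p, q]
      ring
    · cases hw : s w <;> simp [hw, hp, hq]

theorem ncard_setOf_exists_ne {V α : Type*} [Fintype V] [Nonempty V] [Fintype α] :
    {f : V → α | ∃ u v, f u ≠ f v}.ncard = Fintype.card α ^ Fintype.card V - Fintype.card α := by
  have : {f : V → α | ∃ u v, f u ≠ f v} = (Set.range (Function.const V : α → V → α))ᶜ := by
    ext f
    simp only [Set.mem_ofPred_eq, Set.mem_compl_iff, Set.mem_range, not_exists]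
    constructor
    · rintro ⟨u, v, huv⟩ a rfl
      exact huv rfl
    · intro hf
      by_contra! hconst
      obtain ⟨v₀⟩ := ‹Nonempty V›
      exact hf (f v₀) (funext fun v => (hconst v v₀).symm)
  rw [this, Set.ncard_compl, Set.ncard_range_of_injective Function.const_injective, Nat.card_fun]
  simp

theorem stmt12_general {V : Type*} [Fintype V] (G : SimpleGraph V)
    [DecidableRel G.Adj] (hG : G.Connected) :
    (∀ s : V → Bool, (∃ u v, s u ≠ s v) →
      ∃ c : V → ℝ, ∀ v, (if s v then (1 : ℝ) else -1) *
        ((G.degree v : ℝ) * c v - ∑ w ∈ G.neighborFinset v, c w) > 0) ∧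
    Set.ncard {s : V → Bool | ∃ c : V → ℝ, ∀ v, (if s v then (1 : ℝ) else -1) *
        ((G.degree v : ℝ) * c v - ∑ w ∈ G.neighborFinset v, c w) > 0} =
      2 ^ Fintype.card V - 2 := by
  classical
  have := hG.nonempty
  have meets_orthant_iff (s : V → Bool) :
      (∃ c : V → ℝ, ∀ v, (if s v then (1 : ℝ) else -1) *
        ((G.degree v : ℝ) * c v - ∑ w ∈ G.neighborFinset v, c w) > 0) ↔ ∃ u v, s u ≠ s v := by
    simp_rw [← G.lapMatrix_mulVec_apply]
    rw [← exists_sum_eq_zero_and_signs_iff (R := ℝ)]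
    constructor
    · rintro ⟨c, hc⟩
      exact ⟨_, G.sum_lapMatrix_mulVec c, hc⟩
    · rintro ⟨x, hx, hsign⟩
      obtain ⟨c, rfl⟩ : x ∈ Set.range (G.lapMatrix ℝ *ᵥ ·) := G.range_lapMatrix_mulVec hG ▸ hx
      exact ⟨c, hsign⟩
  refine ⟨fun s => (meets_orthant_iff s).mpr, ?_⟩
  simp_rw [meets_orthant_iff]
  exact ncard_setOf_exists_ne

/-- For a connected graph on n ≥ 2 vertices and every nonconstant sign vector
s ∈ {±1}^V, there is c with s(v)·(Lc)(v) > 0 for all v; consequently the image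
of the Laplacian meets exactly 2^n - 2 of the 2^n open orthants. -/
theorem stmt12 {V : Type*} [Fintype V] [DecidableEq V] (G : SimpleGraph V)
    [DecidableRel G.Adj] (hG : G.Connected) (hn : 2 ≤ Fintype.card V) :
    (∀ s : V → Bool, (∃ u v, s u ≠ s v) →
      ∃ c : V → ℝ, ∀ v, (if s v then (1 : ℝ) else -1) *
        ((G.degree v : ℝ) * c v - ∑ w ∈ G.neighborFinset v, c w) > 0) ∧
    Set.ncard {s : V → Bool | ∃ c : V → ℝ, ∀ v, (if s v then (1 : ℝ) else -1) *
        ((G.degree v : ℝ) * c v - ∑ w ∈ G.neighborFinset v, c w) > 0} =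
      2 ^ Fintype.card V - 2 :=
  stmt12_general G hG
end

section
/- Let G be a connected graph on n ≥ 2 vertices, m ≥ 1, and for each m-coloring c of G let β(c) be the number of nonconstant vertex orientations compatible with c. Then Σ_c β(c) ≥ ℏ_G(m), with equality contributions: each nowhere-harmonic coloring contributes exactly 1 to the sum, and every coloring contributes at least 1. -/
/-!
Put `a v = deg v · c v` and `s v = ∑_{w ∼ v} c w`; double counting the edges gives
`∑ a = ∑ s`. Orienting every vertex by the sign of `s v - a v` is always compatible with `c`,
and it is nonconstant unless `c` is harmonic everywhere: otherwise `a - s` would have one sign,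
be nonzero somewhere and still sum to zero. A harmonic coloring is compatible with every
orientation, and at a non-harmonic vertex a compatible orientation has no choice, so a nowhere
harmonic coloring has exactly one.
-/

open Finset

theorem SimpleGraph.sum_sum_neighborFinset {V M : Type*} [Fintype V] [AddCommMonoid M]
    (G : SimpleGraph V) [DecidableRel G.Adj] (f : V → M) :
    ∑ v, ∑ w ∈ G.neighborFinset v, f w = ∑ v, G.degree v • f v := by
  rw [sum_comm' (t' := univ) (s' := fun w => G.neighborFinset w)
    (fun v w => by simp [G.adj_comm])]
  simp only [sum_const, SimpleGraph.card_neighborFinset_eq_degree]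

section Orientation

variable {V α : Type*} [LinearOrder α]

def signOrientation (a s : V → α) (v : V) : Bool := decide (a v ≤ s v)

theorem signOrientation_compatible (a s : V → α) (v : V) :
    (signOrientation a s v = true → a v ≤ s v) ∧
      (signOrientation a s v = false → s v ≤ a v) := by
  simp only [signOrientation, decide_eq_true_eq, decide_eq_false_iff_not, not_le]
  exact ⟨id, le_of_lt⟩

theorem eq_signOrientation_of_compatible {a s : V → α} (hne : ∀ v, a v ≠ s v)
    {ε : V → Bool} (hε : ∀ v, (ε v = true → a v ≤ s v) ∧ (ε v = false → s v ≤ a v)) :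
    ε = signOrientation a s := by
  funext v
  cases hv : ε v with
  | true => simp [signOrientation, (hε v).1 hv]
  | false => simpa [signOrientation] using lt_of_le_of_ne ((hε v).2 hv) (hne v).symm

def nonconstantCompatibleOrientations [Fintype V] [DecidableEq V] (a s : V → α) :
    Finset (V → Bool) :=
  univ.filter fun ε => (∃ u v, ε u ≠ ε v) ∧
    ∀ v, (ε v = true → a v ≤ s v) ∧ (ε v = false → s v ≤ a v)

variable [Fintype V] [AddCommMonoid α] [IsOrderedCancelAddMonoid α]

theorem signOrientation_nonconstant {a s : V → α} (hsum : ∑ v, a v = ∑ v, s v)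
    {v₀ : V} (hv₀ : a v₀ ≠ s v₀) :
    ∃ u v, signOrientation a s u ≠ signOrientation a s v := by
  by_contra! hconst
  rcases hv₀.lt_or_gt with hlt | hgt
  · have hle : ∀ v ∈ univ, a v ≤ s v := fun v _ => by
      simpa [signOrientation, hlt.le] using hconst v v₀
    exact (sum_lt_sum hle ⟨v₀, mem_univ _, hlt⟩).ne hsum
  · have hlt : ∀ v ∈ univ, s v < a v := fun v _ => by
      simpa [signOrientation, not_le.mpr hgt] using hconst v v₀
    exact (sum_lt_sum_of_nonempty ⟨v₀, mem_univ _⟩ hlt).ne' hsum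

variable [DecidableEq V]

theorem nonconstantCompatibleOrientations_nonempty (hV : 2 ≤ Fintype.card V)
    {a s : V → α} (hsum : ∑ v, a v = ∑ v, s v) :
    (nonconstantCompatibleOrientations a s).Nonempty := by
  by_cases hharm : ∀ v, a v = s v
  · obtain ⟨u, v, huv⟩ := Fintype.exists_pair_of_one_lt_card hV
    exact ⟨fun x => decide (x = u), mem_filter.mpr ⟨mem_univ _, ⟨u, v, by simp [huv.symm]⟩,
      fun w => ⟨fun _ => (hharm w).le, fun _ => (hharm w).ge⟩⟩⟩
  · obtain ⟨v₀, hv₀⟩ := not_forall.mp hharm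
    exact ⟨_, mem_filter.mpr ⟨mem_univ _, signOrientation_nonconstant hsum hv₀,
      signOrientation_compatible a s⟩⟩

theorem card_nonconstantCompatibleOrientations_eq_one (hV : 2 ≤ Fintype.card V)
    {a s : V → α} (hsum : ∑ v, a v = ∑ v, s v) (hne : ∀ v, a v ≠ s v) :
    (nonconstantCompatibleOrientations a s).card = 1 := by
  refine le_antisymm (card_le_one.mpr fun ε hε ε' hε' => ?_)
    (nonconstantCompatibleOrientations_nonempty hV hsum).card_pos
  rw [eq_signOrientation_of_compatible hne (mem_filter.mp hε).2.2,
    eq_signOrientation_of_compatible hne (mem_filter.mp hε').2.2]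

end Orientation

/-- Colorings are `c : V → Fin m` with color value `c v + 1`; orientations are
`ε : V → Bool` with `true = +1` and `false = -1`. -/
theorem stmt18_general {V : Type*} [Fintype V] [DecidableEq V] (G : SimpleGraph V)
    [DecidableRel G.Adj] (hn : 2 ≤ Fintype.card V)
    (m : ℕ) :
    (∀ c : V → Fin m, 1 ≤ (Finset.univ.filter (fun ε : V → Bool =>
        (∃ u v, ε u ≠ ε v) ∧ ∀ v,
          (ε v = true → (G.degree v : ℚ) * ((c v : ℕ) + 1) ≤
            ∑ w ∈ G.neighborFinset v, ((c w : ℕ) + 1 : ℚ)) ∧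
          (ε v = false → (∑ w ∈ G.neighborFinset v, ((c w : ℕ) + 1 : ℚ)) ≤
            (G.degree v : ℚ) * ((c v : ℕ) + 1)))).card) ∧
    (∀ c : V → Fin m,
      (∀ v, (G.degree v : ℚ) * ((c v : ℕ) + 1) ≠
        ∑ w ∈ G.neighborFinset v, ((c w : ℕ) + 1 : ℚ)) →
      (Finset.univ.filter (fun ε : V → Bool =>
        (∃ u v, ε u ≠ ε v) ∧ ∀ v,
          (ε v = true → (G.degree v : ℚ) * ((c v : ℕ) + 1) ≤
            ∑ w ∈ G.neighborFinset v, ((c w : ℕ) + 1 : ℚ)) ∧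
          (ε v = false → (∑ w ∈ G.neighborFinset v, ((c w : ℕ) + 1 : ℚ)) ≤
            (G.degree v : ℚ) * ((c v : ℕ) + 1)))).card = 1) ∧
    (Finset.univ.filter (fun c : V → Fin m =>
        ∀ v, (G.degree v : ℚ) * ((c v : ℕ) + 1) ≠
          ∑ w ∈ G.neighborFinset v, ((c w : ℕ) + 1 : ℚ))).card ≤
      ∑ c : V → Fin m, (Finset.univ.filter (fun ε : V → Bool =>
        (∃ u v, ε u ≠ ε v) ∧ ∀ v,
          (ε v = true → (G.degree v : ℚ) * ((c v : ℕ) + 1) ≤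
            ∑ w ∈ G.neighborFinset v, ((c w : ℕ) + 1 : ℚ)) ∧
          (ε v = false → (∑ w ∈ G.neighborFinset v, ((c w : ℕ) + 1 : ℚ)) ≤
            (G.degree v : ℚ) * ((c v : ℕ) + 1)))).card := by
  let a (c : V → Fin m) (v : V) : ℚ := G.degree v * ((c v : ℕ) + 1)
  let s (c : V → Fin m) (v : V) : ℚ := ∑ w ∈ G.neighborFinset v, ((c w : ℕ) + 1 : ℚ)
  have hsum (c : V → Fin m) : ∑ v, a c v = ∑ v, s c v := by
    simp only [a, s, G.sum_sum_neighborFinset, nsmul_eq_mul]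
  have hpos (c : V → Fin m) : 1 ≤ (nonconstantCompatibleOrientations (a c) (s c)).card :=
    (nonconstantCompatibleOrientations_nonempty hn (hsum c)).card_pos
  refine ⟨hpos, fun c hne => card_nonconstantCompatibleOrientations_eq_one hn (hsum c) hne, ?_⟩
  calc (univ.filter fun c => ∀ v, a c v ≠ s c v).card
      ≤ ∑ c ∈ univ.filter (fun c => ∀ v, a c v ≠ s c v),
          (nonconstantCompatibleOrientations (a c) (s c)).card :=
        card_eq_sum_ones _ ▸ sum_le_sum fun c _ => hpos c
    _ ≤ ∑ c, (nonconstantCompatibleOrientations (a c) (s c)).card :=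
        sum_le_sum_of_subset (filter_subset _ _)

/-- For a connected graph on n ≥ 2 vertices: every m-coloring is compatible
with at least one nonconstant vertex orientation (β(c) ≥ 1), every
nowhere-harmonic coloring is compatible with exactly one (β(c) = 1), and
consequently Σ_c β(c) ≥ ℏ_G(m). Colorings are c : V → Fin m with color value
(c v) + 1; orientations are ε : V → Bool (true = +1, false = -1). -/
theorem stmt18 {V : Type*} [Fintype V] [DecidableEq V] (G : SimpleGraph V)
    [DecidableRel G.Adj] (hG : G.Connected) (hn : 2 ≤ Fintype.card V)
    (m : ℕ) (hm : 1 ≤ m) :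
    (∀ c : V → Fin m, 1 ≤ (Finset.univ.filter (fun ε : V → Bool =>
        (∃ u v, ε u ≠ ε v) ∧ ∀ v,
          (ε v = true → (G.degree v : ℚ) * ((c v : ℕ) + 1) ≤
            ∑ w ∈ G.neighborFinset v, ((c w : ℕ) + 1 : ℚ)) ∧
          (ε v = false → (∑ w ∈ G.neighborFinset v, ((c w : ℕ) + 1 : ℚ)) ≤
            (G.degree v : ℚ) * ((c v : ℕ) + 1)))).card) ∧
    (∀ c : V → Fin m,
      (∀ v, (G.degree v : ℚ) * ((c v : ℕ) + 1) ≠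
        ∑ w ∈ G.neighborFinset v, ((c w : ℕ) + 1 : ℚ)) →
      (Finset.univ.filter (fun ε : V → Bool =>
        (∃ u v, ε u ≠ ε v) ∧ ∀ v,
          (ε v = true → (G.degree v : ℚ) * ((c v : ℕ) + 1) ≤
            ∑ w ∈ G.neighborFinset v, ((c w : ℕ) + 1 : ℚ)) ∧
          (ε v = false → (∑ w ∈ G.neighborFinset v, ((c w : ℕ) + 1 : ℚ)) ≤
            (G.degree v : ℚ) * ((c v : ℕ) + 1)))).card = 1) ∧
    (Finset.univ.filter (fun c : V → Fin m =>
        ∀ v, (G.degree v : ℚ) * ((c v : ℕ) + 1) ≠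
          ∑ w ∈ G.neighborFinset v, ((c w : ℕ) + 1 : ℚ))).card ≤
      ∑ c : V → Fin m, (Finset.univ.filter (fun ε : V → Bool =>
        (∃ u v, ε u ≠ ε v) ∧ ∀ v,
          (ε v = true → (G.degree v : ℚ) * ((c v : ℕ) + 1) ≤
            ∑ w ∈ G.neighborFinset v, ((c w : ℕ) + 1 : ℚ)) ∧
          (ε v = false → (∑ w ∈ G.neighborFinset v, ((c w : ℕ) + 1 : ℚ)) ≤
            (G.degree v : ℚ) * ((c v : ℕ) + 1)))).card :=
  stmt18_general G hn m
end
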